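/- arXiv:1711.06054 — 3 statements merged into one kernel-verified Lean document; each statement's English description precedes it below -/
import Mathlib

section
/- Let S be a dense subsemigroup of ((0,∞),+). Then O⁺(S) = {p ∈ βS : for all ε > 0, S ∩ (0,ε) ∈ p} is a nonempty compact subsemigroup of (βS, +). -/
open Filter Topology Set

noncomputable section

/-- The extension of `+` on a discrete semigroup to its Stone–Čech compactification
(space of ultrafilters): `A ∈ p + q` iff `{x : -x + A ∈ q} ∈ p`. -/
def uadd {α : Type} [Add α] (p q : Ultrafilter α) : Ultrafilter α :=
  p.bind fun a => q.map (a + ·)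

/-- `O⁺(S) = {p ∈ βS : for all ε > 0, S ∩ (0,ε) ∈ p}`. -/
def Oplus (S : AddSubsemigroup ℝ) : Set (Ultrafilter S) :=
  {p | ∀ ε : ℝ, 0 < ε → {x : S | (x : ℝ) < ε} ∈ p}

def IsLeftIdealIn {α : Type} [Add α] (T L : Set (Ultrafilter α)) : Prop :=
  L.Nonempty ∧ L ⊆ T ∧ ∀ p ∈ T, ∀ q ∈ L, uadd p q ∈ L

def IsMinimalLeftIdealIn {α : Type} [Add α] (T L : Set (Ultrafilter α)) : Prop :=
  IsLeftIdealIn T L ∧ ∀ L', IsLeftIdealIn T L' → L' ⊆ L → L' = L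

/-- The smallest ideal `K(O⁺(S))`, described as the union of all minimal left ideals. -/
def KOplus (S : AddSubsemigroup ℝ) : Set (Ultrafilter S) :=
  {p | ∃ L, IsMinimalLeftIdealIn (Oplus S) L ∧ p ∈ L}

/-- A dynamical system over an additive semigroup. -/
structure DynSys (σ : Type) [Add σ] where
  X : Type
  [ts : TopologicalSpace X]
  [cs : CompactSpace X]
  [t2 : T2Space X]
  T : σ → X → X
  cont : ∀ s, Continuous (T s)
  comp : ∀ s t, T s ∘ T t = T (s + t)

attribute [instance] DynSys.ts DynSys.cs DynSys.t2

/-- `T_p(x) = p-lim_{s ∈ S} T_s(x)`. -/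
def DynSys.Tp {σ : Type} [Add σ] (D : DynSys σ) (p : Ultrafilter σ) (x : D.X) : D.X :=
  (p.map fun s => D.T s x).lim

/-- `B` is syndetic near zero. -/
def syndeticNearZero (S : AddSubsemigroup ℝ) (A : Set S) : Prop :=
  ∀ ε : ℝ, 0 < ε → ∃ F : Finset S, F.Nonempty ∧ (∀ t ∈ F, (t : ℝ) < ε) ∧
    ∃ δ : ℝ, 0 < δ ∧ ∀ s : S, (s : ℝ) < δ → ∃ t ∈ F, t + s ∈ A

def uniformlyRecurrentNearZero (S : AddSubsemigroup ℝ) (D : DynSys S) (x : D.X) : Prop :=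
  ∀ W ∈ nhds x, syndeticNearZero S {s : S | D.T s x ∈ W}

/-- `x` and `y` are proximal near zero. -/
def proximalNearZero (S : AddSubsemigroup ℝ) (D : DynSys S) (x y : D.X) : Prop :=
  ∀ U ∈ nhdsSet (Set.diagonal D.X), ∀ ε : ℝ, 0 < ε →
    ∃ s : S, (s : ℝ) < ε ∧ (D.T s x, D.T s y) ∈ U

/-- `A` is piecewise syndetic near zero. -/
def piecewiseSyndeticNearZero (S : AddSubsemigroup ℝ) (A : Set S) : Prop :=
  ∃ (F : ℕ → Finset S) (δ : ℕ → ℝ),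
    (∀ n : ℕ, (F n).Nonempty ∧ (∀ t ∈ F n, (t : ℝ) < 1 / (n + 1)) ∧
      0 < δ n ∧ δ n < 1 / (n + 1)) ∧
    ∀ G : Finset S, ∀ μ : ℝ, 0 < μ → ∃ x : S, (x : ℝ) < μ ∧
      ∀ n : ℕ, ∀ g ∈ G, (g : ℝ) < δ n → ∃ t ∈ F n, t + (g + x) ∈ A

/-- `A` is a J-set near zero. -/
def JSetNearZero (S : AddSubsemigroup ℝ) (A : Set S) : Prop :=
  ∀ F : Finset (ℕ → S), F.Nonempty →
    (∀ f ∈ F, Tendsto (fun n => ((f n : S) : ℝ)) atTop (nhds 0)) →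
    ∀ δ : ℝ, 0 < δ → ∃ a : S, (a : ℝ) < δ ∧ ∃ H : Finset ℕ, H.Nonempty ∧
      ∀ f ∈ F, ∃ b ∈ A, (b : ℝ) = (a : ℝ) + ∑ t ∈ H, ((f t : S) : ℝ)

def J0 (S : AddSubsemigroup ℝ) : Set (Ultrafilter S) :=
  {p | p ∈ Oplus S ∧ ∀ A ∈ p, JSetNearZero S A}

/-- jointly intermittently uniformly recurrent near zero. -/
def JIUR0 (S : AddSubsemigroup ℝ) (D : DynSys S) (x y : D.X) : Prop :=
  ∀ U ∈ nhds y, piecewiseSyndeticNearZero S {s : S | D.T s x ∈ U ∧ D.T s y ∈ U}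

/-- jointly intermittently almost uniformly recurrent near zero. -/
def JIAUR0 (S : AddSubsemigroup ℝ) (D : DynSys S) (x y : D.X) : Prop :=
  ∀ U ∈ nhds y, JSetNearZero S {s : S | D.T s x ∈ U ∧ D.T s y ∈ U}
theorem stmt0 (S : AddSubsemigroup ℝ)
    (hpos : ∀ x : ℝ, x ∈ S → 0 < x)
    (hdense : Set.Ioi (0 : ℝ) ⊆ closure (S : Set ℝ)) :
    (Oplus S).Nonempty ∧ IsCompact (Oplus S) ∧
      ∀ p ∈ Oplus S, ∀ q ∈ Oplus S, uadd p q ∈ Oplus S := by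
  have hex : ∀ ε : ℝ, 0 < ε → ∃ s : S, (s : ℝ) < ε := by
    intro ε hε
    have h2 : (ε / 2) ∈ closure (S : Set ℝ) := hdense (by simp [hε, half_pos])
    rcases mem_closure_iff.mp h2 (Ioo 0 ε) isOpen_Ioo ⟨half_pos hε, half_lt_self hε⟩ with
      ⟨x, hx, hxS⟩
    exact ⟨⟨x, hxS⟩, hx.2⟩
  have hF : ∀ ε : ℝ, 0 < ε → {x : S | (x : ℝ) < ε} ∈
      Filter.comap (fun x : S => (x : ℝ)) (𝓝[>] (0:ℝ)) := by
    intro ε hε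
    refine mem_comap.mpr ⟨Ioo 0 ε, (nhdsGT_basis (0:ℝ)).mem_of_mem hε, ?_⟩
    intro x hx; exact hx.2
  have hne : (Filter.comap (fun x : S => (x : ℝ)) (𝓝[>] (0:ℝ))).NeBot := by
    rw [Filter.comap_neBot_iff]
    intro t ht
    rcases (nhdsGT_basis (0:ℝ)).mem_iff.mp ht with ⟨ε, hε, hsub⟩
    rcases hex ε hε with ⟨s, hs⟩
    exact ⟨s, hsub ⟨hpos _ s.2, hs⟩⟩
  refine ⟨⟨Ultrafilter.of _, fun ε hε => (Ultrafilter.of_le _) (hF ε hε)⟩, ?_, ?_⟩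
  · have : Oplus S = ⋂ ε ∈ Set.Ioi (0:ℝ), {p : Ultrafilter S | {x : S | (x : ℝ) < ε} ∈ p} := by
      ext p; simp [Oplus, Set.mem_iInter]
    rw [this]
    exact (isClosed_biInter fun ε _ => ultrafilter_isClosed_basic _).isCompact
  · intro p hp q hq ε hε
    have key : {a : S | {x : S | (x : ℝ) < ε} ∈ q.map (a + ·)} ∈ p := by
      refine Filter.mem_of_superset (hp (ε/2) (half_pos hε)) ?_
      intro a (ha : (a : ℝ) < ε / 2)
      refine Filter.mem_of_superset (hq (ε/2) (half_pos hε)) ?_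
      intro b (hb : (b : ℝ) < ε / 2)
      show ((a + b : S) : ℝ) < ε
      push_cast
      linarith
    exact key
end
end

section
/- Let S be a dense subsemigroup of ((0,∞),+) and let (X, ⟨T_s⟩_{s∈S}) be a dynamical system. Then points x, y ∈ X are proximal near zero if and only if there exists p ∈ O⁺(S) such that T_p(x) = T_p(y). -/
open Filter Topology Set

noncomputable section

theorem stmt1 (S : AddSubsemigroup ℝ)
    (hpos : ∀ x : ℝ, x ∈ S → 0 < x)
    (hdense : Set.Ioi (0 : ℝ) ⊆ closure (S : Set ℝ))
    (D : DynSys S) (x y : D.X) :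
    proximalNearZero S D x y ↔ ∃ p ∈ Oplus S, D.Tp p x = D.Tp p y := by
  constructor
  · intro hprox
    set I := {Uε : Set (D.X × D.X) × ℝ // Uε.1 ∈ nhdsSet (Set.diagonal D.X) ∧ 0 < Uε.2}
      with hI
    haveI hne : Nonempty I := ⟨⟨(Set.univ, 1), Filter.univ_mem, one_pos⟩⟩
    let A : I → Set S := fun i => {s : S | (s : ℝ) < i.1.2 ∧ (D.T s x, D.T s y) ∈ i.1.1}
    have hAne : ∀ i, (A i).Nonempty := by
      intro i
      obtain ⟨s, hs1, hs2⟩ := hprox i.1.1 i.2.1 i.1.2 i.2.2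
      exact ⟨s, hs1, hs2⟩
    have hdir : Directed (· ≥ ·) (fun i => (𝓟 (A i) : Filter S)) := by
      intro i j
      refine ⟨⟨(i.1.1 ∩ j.1.1, min i.1.2 j.1.2),
        Filter.inter_mem i.2.1 j.2.1, lt_min i.2.2 j.2.2⟩, ?_, ?_⟩
      · refine Filter.principal_mono.2 fun s hs => ⟨hs.1.trans_le (min_le_left _ _), hs.2.1⟩
      · refine Filter.principal_mono.2 fun s hs => ⟨hs.1.trans_le (min_le_right _ _), hs.2.2⟩
    haveI hbot : (⨅ i, (𝓟 (A i) : Filter S)).NeBot :=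
      Filter.iInf_neBot_of_directed' hdir fun i => Filter.principal_neBot_iff.2 (hAne i)
    obtain ⟨p, hple⟩ := Ultrafilter.exists_le (⨅ i, (𝓟 (A i) : Filter S))
    have hmemA : ∀ i, A i ∈ p := fun i =>
      Filter.le_principal_iff.1 (hple.trans (iInf_le _ i))
    have hOp : p ∈ Oplus S := by
      intro ε hε
      exact Filter.mem_of_superset
        (hmemA ⟨(Set.univ, ε), Filter.univ_mem, hε⟩) fun s hs => hs.1
    refine ⟨p, hOp, ?_⟩
    by_contra hne'
    obtain ⟨U, V, hUo, hVo, hdU, hV, hdisj⟩ :=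
      normal_separation (isClosed_diagonal (X := D.X))
        (isClosed_singleton (x := (D.Tp p x, D.Tp p y)))
        (by simpa [Set.disjoint_singleton_right, Set.mem_diagonal_iff] using hne')
    have hUn : U ∈ nhdsSet (Set.diagonal D.X) := hUo.mem_nhdsSet.2 hdU
    have hmemU : {s : S | (D.T s x, D.T s y) ∈ U} ∈ p :=
      Filter.mem_of_superset (hmemA ⟨(U, 1), hUn, one_pos⟩) fun s hs => hs.2
    have hx : Filter.Tendsto (fun s => D.T s x) ↑p (𝓝 (D.Tp p x)) :=
      (p.map fun s => D.T s x).le_nhds_lim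
    have hy : Filter.Tendsto (fun s => D.T s y) ↑p (𝓝 (D.Tp p y)) :=
      (p.map fun s => D.T s y).le_nhds_lim
    have hpair : Filter.Tendsto (fun s => (D.T s x, D.T s y)) ↑p
        (𝓝 (D.Tp p x, D.Tp p y)) := hx.prodMk_nhds hy
    have hmemV : {s : S | (D.T s x, D.T s y) ∈ V} ∈ p :=
      hpair (hVo.mem_nhds (hV rfl))
    obtain ⟨s, hs1, hs2⟩ := Ultrafilter.nonempty_of_mem (p.inter_mem hmemU hmemV)
    exact (hdisj.ne_of_mem hs1 hs2) rfl
  · intro ⟨p, hp, heq⟩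
    intro U hU ε hε
    have hx : Filter.Tendsto (fun s => D.T s x) ↑p (𝓝 (D.Tp p x)) :=
      (p.map fun s => D.T s x).le_nhds_lim
    have hy : Filter.Tendsto (fun s => D.T s y) ↑p (𝓝 (D.Tp p y)) :=
      (p.map fun s => D.T s y).le_nhds_lim
    rw [heq] at hx
    have hpair : Filter.Tendsto (fun s => (D.T s x, D.T s y)) ↑p
        (𝓝 (D.Tp p y, D.Tp p y)) := hx.prodMk_nhds hy
    have hUmem : U ∈ 𝓝 ((D.Tp p y, D.Tp p y) : D.X × D.X) :=
      nhds_le_nhdsSet (by exact rfl) hU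
    have h1 : {s : S | (D.T s x, D.T s y) ∈ U} ∈ p := hpair hUmem
    have h2 : {s : S | (s : ℝ) < ε} ∈ p := hp ε hε
    obtain ⟨s, hs1, hs2⟩ := (p.inter_mem h2 h1 : _ ∈ p) |> Ultrafilter.nonempty_of_mem
    exact ⟨s, hs1, hs2⟩
end
end

section
/- Let S be a dense subsemigroup of ((0,∞),+), let (X, ⟨T_s⟩_{s∈S}) be a dynamical system, let L be a minimal left ideal of O⁺(S), and let x ∈ X. If x is a uniformly recurrent point near zero, then there exists u ∈ L with T_u(x) = x. -/
open Filter Topology Set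

noncomputable section

lemma DynSys.tendsto_Tp {σ : Type} [Add σ] (D : DynSys σ) (p : Ultrafilter σ) (x : D.X) :
    Tendsto (fun s => D.T s x) (↑p) (𝓝 (D.Tp p x)) := by
  have h := (p.map fun s => D.T s x).le_nhds_lim
  rwa [Ultrafilter.coe_map] at h

lemma DynSys.Tp_eq {σ : Type} [Add σ] (D : DynSys σ) {p : Ultrafilter σ} {x y : D.X}
    (h : Tendsto (fun s => D.T s x) (↑p) (𝓝 y)) : D.Tp p x = y :=
  tendsto_nhds_unique (D.tendsto_Tp p x) h

lemma mem_uadd {α : Type} [Add α] {p q : Ultrafilter α} {A : Set α} :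
    A ∈ uadd p q ↔ {a | {b | a + b ∈ A} ∈ q} ∈ p := Iff.rfl

lemma DynSys.comp' {σ : Type} [Add σ] (D : DynSys σ) (s t : σ) (x : D.X) :
    D.T (s + t) x = D.T s (D.T t x) := (congrFun (D.comp s t) x).symm

lemma DynSys.Tp_uadd {σ : Type} [Add σ] (D : DynSys σ) (p q : Ultrafilter σ) (x : D.X) :
    D.Tp (uadd p q) x = D.Tp p (D.Tp q x) := by
  apply D.Tp_eq
  rw [tendsto_nhds]
  intro U hU hmem
  have h1 : {a | D.T a (D.Tp q x) ∈ U} ∈ p :=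
    (D.tendsto_Tp p (D.Tp q x)) (hU.mem_nhds hmem)
  have key : (fun s => D.T s x) ⁻¹' U ∈ ↑(uadd p q) ↔
      {a | {b | D.T (a + b) x ∈ U} ∈ q} ∈ p := Iff.rfl
  rw [Ultrafilter.mem_coe, key]
  filter_upwards [h1] with a ha
  have h2 : Tendsto (fun b => D.T a (D.T b x)) ↑q (𝓝 (D.T a (D.Tp q x))) :=
    ((D.cont a).tendsto _).comp (D.tendsto_Tp q x)
  have h3 : {b | D.T a (D.T b x) ∈ U} ∈ q := h2 (hU.mem_nhds ha)
  have : {b | D.T (a + b) x ∈ U} = {b | D.T a (D.T b x) ∈ U} := by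
    ext b; simp [D.comp' a b x]
  rw [this]; exact h3

theorem stmt2 (S : AddSubsemigroup ℝ)
    (hpos : ∀ x : ℝ, x ∈ S → 0 < x)
    (hdense : Set.Ioi (0 : ℝ) ⊆ closure (S : Set ℝ))
    (D : DynSys S) (L : Set (Ultrafilter S))
    (hL : IsMinimalLeftIdealIn (Oplus S) L) (x : D.X)
    (hx : uniformlyRecurrentNearZero S D x) :
    ∃ u ∈ L, D.Tp u x = x := by
  obtain ⟨⟨⟨q, hq⟩, hLsub, hideal⟩, _⟩ := hL
  set y := D.Tp q x with hy
  have hqO : q ∈ Oplus S := hLsub hq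
  -- Step A: points of S arbitrarily near 0 send y into any closed nbhd of x
  have stepA : ∀ W : Set D.X, IsClosed W → W ∈ 𝓝 x → ∀ ε : ℝ, 0 < ε →
      ∃ t : S, (t : ℝ) < ε ∧ D.T t y ∈ W := by
    intro W hWc hWn ε hε
    obtain ⟨F, hFne, hFlt, δ, hδ, hcov⟩ := hx W hWn ε hε
    have hsmall : {s : S | (s : ℝ) < δ} ∈ q := hqO δ hδ
    have hunion : (⋃ t ∈ (F : Set S), {s : S | D.T (t + s) x ∈ W}) ∈ q := by
      refine Filter.mem_of_superset hsmall ?_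
      intro s hs
      obtain ⟨t, htF, htB⟩ := hcov s hs
      exact Set.mem_biUnion htF htB
    obtain ⟨t, htF, htq⟩ := (Ultrafilter.finite_biUnion_mem_iff F.finite_toSet).mp hunion
    refine ⟨t, hFlt t htF, ?_⟩
    have h2 : Tendsto (fun s => D.T t (D.T s x)) ↑q (𝓝 (D.T t y)) :=
      ((D.cont t).tendsto _).comp (D.tendsto_Tp q x)
    refine hWc.mem_of_tendsto h2 ?_
    refine Filter.mem_of_superset htq ?_
    intro s hs
    have := D.comp' t s x
    simpa [this] using hs
  -- Step B: construct r ∈ O⁺ with T_r y = x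
  set F0 : Filter S := Filter.comap (fun t : S => D.T t y) (𝓝 x) ⊓
    Filter.comap (fun t : S => (t : ℝ)) (𝓝[>] (0 : ℝ)) with hF0
  have hne : F0.NeBot := by
    rw [← Filter.forall_mem_nonempty_iff_neBot]
    intro A hA
    rw [hF0, Filter.mem_inf_iff] at hA
    obtain ⟨t1, ht1, t2, ht2, rfl⟩ := hA
    obtain ⟨W, hW, hWsub⟩ := Filter.mem_comap.mp ht1
    obtain ⟨V, hV, hVsub⟩ := Filter.mem_comap.mp ht2
    obtain ⟨W', ⟨hW'n, hW'c⟩, hW'sub⟩ := (closed_nhds_basis x).mem_iff.mp hW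
    obtain ⟨ε, hε, hIoo⟩ := mem_nhdsGT_iff_exists_Ioo_subset.mp hV
    obtain ⟨t, htε, htW⟩ := stepA W' hW'c hW'n ε hε
    refine ⟨t, hWsub (hW'sub htW), hVsub ?_⟩
    exact hIoo ⟨hpos t t.2, htε⟩
  obtain ⟨r, hr⟩ := Filter.exists_ultrafilter_le F0
  have hrO : r ∈ Oplus S := by
    intro ε hε
    have hIoo : Set.Ioo (0 : ℝ) ε ∈ 𝓝[>] (0 : ℝ) :=
      Ioo_mem_nhdsGT_of_mem ⟨le_refl _, hε⟩
    have : (fun t : S => (t : ℝ)) ⁻¹' Set.Ioo 0 ε ∈ F0 :=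
      Filter.mem_inf_of_right (Filter.preimage_mem_comap hIoo)
    refine Filter.mem_of_superset (hr this) ?_
    intro t ht
    exact ht.2
  have hTr : D.Tp r y = x := by
    apply D.Tp_eq
    rw [Filter.tendsto_iff_comap]
    exact le_trans hr (le_trans inf_le_left le_rfl)
  refine ⟨uadd r q, hideal r hrO q hq, ?_⟩
  rw [D.Tp_uadd, ← hy, hTr]
end
end
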